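/- Let C ⊆ G^n be a cyclic group code, and suppose C is isomorphic as a group code to a direct sum D_1 ⊕ ⋯ ⊕ D_m where each D_j is an indecomposable group code. Then D_j ≅ D_1 as group codes for every j ∈ {1,…,m}. -/

import Mathlib

section GroupCodes
variable {G : Type*} [Group G] [DecidableEq G]

/-- The canonical splitting homomorphism `G^{n+m} → G^n × G^m`. -/
def splitHom (G : Type*) [Group G] (n m : ℕ) :
    (Fin (n + m) → G) →* (Fin n → G) × (Fin m → G) where
  toFun z := (fun i => z (Fin.castAdd m i), fun j => z (Fin.natAdd n j))
  map_one' := rfl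
  map_mul' _ _ := rfl

/-- Direct sum of two group codes, as a subgroup of `G^{n+m}`. -/
def gcSum {n m : ℕ} (C : Subgroup (Fin n → G)) (D : Subgroup (Fin m → G)) :
    Subgroup (Fin (n + m) → G) :=
  (C.prod D).comap (splitHom G n m)

/-- `φ` is a morphism of group codes from `C` to `D`. -/
def IsGroupCodeHom {n m : ℕ} (C : Subgroup (Fin n → G)) (D : Subgroup (Fin m → G))
    (φ : (Fin n → G) → (Fin m → G)) : Prop :=
  (∀ x y : Fin n → G, φ (x * y) = φ x * φ y) ∧ (∀ x ∈ C, φ x ∈ D) ∧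
    ∀ x y : Fin n → G, hammingDist (φ x) (φ y) ≤ hammingDist x y

/-- The group codes `C` and `D` are isomorphic as group codes. -/
def GroupCodeIso {n m : ℕ} (C : Subgroup (Fin n → G)) (D : Subgroup (Fin m → G)) : Prop :=
  ∃ (φ : (Fin n → G) → (Fin m → G)) (ψ : (Fin m → G) → (Fin n → G)),
    IsGroupCodeHom C D φ ∧ IsGroupCodeHom D C ψ ∧
      Function.LeftInverse ψ φ ∧ Function.RightInverse ψ φ

/-- A group code is decomposable if it is isomorphic, as a group code, to a direct sum
of two group codes of positive lengths. -/
def GCDecomposable {n : ℕ} (C : Subgroup (Fin n → G)) : Prop :=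
  ∃ (p q : ℕ) (D : Subgroup (Fin p → G)) (E : Subgroup (Fin q → G)),
    0 < p ∧ 0 < q ∧ GroupCodeIso C (gcSum D E)

/-- Reindexing homomorphism along an equality of lengths. -/
def reindexHom (G : Type*) [Group G] {a b : ℕ} (h : a = b) :
    (Fin b → G) →* (Fin a → G) where
  toFun z := fun i => z (Fin.cast h i)
  map_one' := rfl
  map_mul' _ _ := rfl

/-- Direct sum of a finite family of group codes (of possibly different lengths). -/
def gcMultiSum : {k : ℕ} → {len : Fin k → ℕ} →
    (∀ i, Subgroup (Fin (len i) → G)) → Subgroup (Fin (∑ i, len i) → G)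
  | 0, _, _ => ⊤
  | k + 1, len, D =>
    (gcSum (D 0) (gcMultiSum (fun i => D i.succ))).comap
      (reindexHom G (a := len 0 + ∑ i : Fin k, len i.succ) (b := ∑ i, len i)
        (Fin.sum_univ_succ len).symm)

/-- Direct sum of `α` copies of the group code `D`. -/
def gcPow {m : ℕ} (D : Subgroup (Fin m → G)) (α : ℕ) :
    Subgroup (Fin (∑ _ : Fin α, m) → G) :=
  gcMultiSum (fun _ : Fin α => D)

/-- The group of group-code automorphisms of a group code `C ⊆ G^n`:  group automorphisms
of `G^n` that preserve the Hamming distance and map `C` onto `C`. -/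
def AutGC {n : ℕ} (C : Subgroup (Fin n → G)) : Subgroup (MulAut (Fin n → G)) where
  carrier := {φ | (∀ x y, hammingDist (φ x) (φ y) = hammingDist x y) ∧
    ∀ x, φ x ∈ C ↔ x ∈ C}
  one_mem' := ⟨fun _ _ => rfl, fun _ => Iff.rfl⟩
  mul_mem' := by
    rintro φ ψ ⟨hφ1, hφ2⟩ ⟨hψ1, hψ2⟩
    exact ⟨fun x y => (hφ1 (ψ x) (ψ y)).trans (hψ1 x y),
      fun x => (hφ2 (ψ x)).trans (hψ2 x)⟩
  inv_mem' := by
    rintro φ ⟨h1, h2⟩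
    refine ⟨fun x y => ?_, fun x => ?_⟩
    · have := h1 (φ⁻¹ x) (φ⁻¹ y)
      rw [MulAut.apply_inv_self, MulAut.apply_inv_self] at this
      exact this.symm
    · have := h2 (φ⁻¹ x)
      rw [MulAut.apply_inv_self] at this
      exact this.symm

/-- The action of `S_α` on `M^α` by permutation of coordinates, as a homomorphism
into the automorphism group. -/
def permActionHom (M : Type*) [Monoid M] (α : ℕ) :
    Equiv.Perm (Fin α) →* MulAut (Fin α → M) where
  toFun σ :=
    { toFun := fun f i => f (σ⁻¹ i)
      invFun := fun f i => f (σ i)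
      left_inv := fun f => by funext i; simp
      right_inv := fun f => by funext i; simp
      map_mul' := fun _ _ => rfl }
  map_one' := by ext f i; simp
  map_mul' σ τ := by ext f i; simp [mul_inv_rev]

/-- A cyclic group code: closed under the cyclic shift of coordinates. -/
def IsCyclicGC {n : ℕ} (C : Subgroup (Fin n → G)) : Prop :=
  ∀ x ∈ C, (x ∘ finRotate n) ∈ C

end GroupCodes

set_option linter.unusedSectionVars false

section Aux
variable {G : Type*} [Group G] [DecidableEq G]

lemma hammingDist_le_of_agree {n : ℕ} {x y : Fin n → G} {A : Finset (Fin n)}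
    (h : ∀ j ∉ A, x j = y j) : hammingDist x y ≤ A.card := by
  apply Finset.card_le_card
  intro j hj
  rw [Finset.mem_filter] at hj
  by_contra hA
  exact hj.2 (h j hA)

lemma le_hammingDist_of_disagree {n : ℕ} {x y : Fin n → G} {A : Finset (Fin n)}
    (h : ∀ j ∈ A, x j ≠ y j) : A.card ≤ hammingDist x y := by
  apply Finset.card_le_card
  intro j hj
  rw [Finset.mem_filter]
  exact ⟨Finset.mem_univ j, h j hj⟩

/-- support of a vector -/
def gsupp {n : ℕ} (x : Fin n → G) : Finset (Fin n) := Finset.univ.filter (fun i => x i ≠ 1)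

lemma mem_gsupp {n : ℕ} {x : Fin n → G} {i : Fin n} : i ∈ gsupp x ↔ x i ≠ 1 := by
  simp [gsupp]

lemma hammingDist_one {n : ℕ} (x : Fin n → G) : hammingDist x 1 = (gsupp x).card := rfl

lemma gsupp_mul_subset {n : ℕ} (x y : Fin n → G) : gsupp (x * y) ⊆ gsupp x ∪ gsupp y := by
  intro i hi
  simp only [mem_gsupp, Finset.mem_union] at *
  by_contra h
  push_neg at h
  exact hi (by simp [Pi.mul_apply, h.1, h.2])

lemma gsupp_eq_empty {n : ℕ} {x : Fin n → G} : gsupp x = ∅ ↔ x = 1 := by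
  constructor
  · intro h; funext i
    by_contra hi
    exact Finset.notMem_empty i (h ▸ mem_gsupp.mpr hi)
  · intro h; subst h; ext i; simp [mem_gsupp]

lemma gsupp_mulSingle {n : ℕ} (i : Fin n) {g : G} (hg : g ≠ 1) :
    gsupp (Pi.mulSingle i g) = {i} := by
  ext j
  simp only [mem_gsupp, Finset.mem_singleton, Pi.mulSingle_apply]
  rcases eq_or_ne j i with rfl | hj
  · simp [hg]
  · simp [hj]

/-- projection to a coordinate set -/
def gproj {n : ℕ} (A : Finset (Fin n)) (x : Fin n → G) : Fin n → G :=
  fun i => if i ∈ A then x i else 1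

lemma gproj_mul_gprojc {n : ℕ} (A : Finset (Fin n)) (x : Fin n → G) :
    gproj A x * gproj Aᶜ x = x := by
  funext i
  by_cases h : i ∈ A <;> simp [gproj, Pi.mul_apply, h]

lemma gsupp_gproj {n : ℕ} (A : Finset (Fin n)) (x : Fin n → G) :
    gsupp (gproj A x) = gsupp x ∩ A := by
  ext i
  by_cases h : i ∈ A <;> simp [mem_gsupp, gproj, h]

lemma gproj_gproj {n : ℕ} (A B : Finset (Fin n)) (x : Fin n → G) :
    gproj A (gproj B x) = gproj (A ∩ B) x := by
  funext i
  by_cases hA : i ∈ A <;> by_cases hB : i ∈ B <;> simp [gproj, hA, hB]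

lemma gproj_eq_self {n : ℕ} {A : Finset (Fin n)} {x : Fin n → G} (h : gsupp x ⊆ A) :
    gproj A x = x := by
  funext i
  by_cases hA : i ∈ A
  · simp [gproj, hA]
  · simp only [gproj, if_neg hA]
    by_contra hx
    exact hA (h (mem_gsupp.mpr (Ne.symm hx)))

/-- an isometric group homomorphism -/
structure GCIsom (G : Type*) [Group G] [DecidableEq G] (a b : ℕ) where
  f : (Fin a → G) → (Fin b → G)
  hom : ∀ x y, f (x * y) = f x * f y
  dist : ∀ x y, hammingDist (f x) (f y) = hammingDist x y

namespace GCIsom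
variable {a b : ℕ}

lemma map_one (F : GCIsom G a b) : F.f 1 = 1 := by
  have h := F.hom 1 1
  rw [one_mul] at h
  exact (mul_left_cancel (a := F.f 1) (by rw [← h, mul_one])).symm

lemma card_gsupp (F : GCIsom G a b) (x : Fin a → G) :
    (gsupp (F.f x)).card = (gsupp x).card := by
  rw [← hammingDist_one, ← hammingDist_one, ← F.map_one]
  exact F.dist x 1

theorem exists_perm (F : GCIsom G a b) (Fi : GCIsom G b a)
    (hri : ∀ y, F.f (Fi.f y) = y)
    {g0 : G} (hg0 : g0 ≠ 1) :
    ∃ π : Fin a → Fin b, Function.Bijective π ∧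
      ∀ x, gsupp (F.f x) = (gsupp x).image π := by
  have hcard1 : ∀ (i : Fin a) (g : G), g ≠ 1 →
      (gsupp (F.f (Pi.mulSingle i g))).card = 1 := by
    intro i g hg
    rw [F.card_gsupp, gsupp_mulSingle i hg, Finset.card_singleton]
  choose c hc using fun i => Finset.card_eq_one.mp (hcard1 i g0 hg0)
  -- L1
  have L1 : ∀ (i : Fin a) (g : G), g ≠ 1 → gsupp (F.f (Pi.mulSingle i g)) = {c i} := by
    intro i g hg
    obtain ⟨d, hd⟩ := Finset.card_eq_one.mp (hcard1 i g hg)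
    rcases eq_or_ne d (c i) with rfl | hne
    · exact hd
    · exfalso
      have hdist : hammingDist (F.f (Pi.mulSingle i g)) (F.f (Pi.mulSingle i g0)) ≤ 1 := by
        rw [F.dist]
        have h1 : hammingDist (Pi.mulSingle i g : Fin a → G) (Pi.mulSingle i g0) ≤
            ({i} : Finset (Fin a)).card := by
          apply hammingDist_le_of_agree
          intro j hj
          rw [Finset.mem_singleton] at hj
          simp [Pi.mulSingle_apply, hj]
        simpa using h1
      have h2 : ({d, c i} : Finset (Fin b)).card ≤
          hammingDist (F.f (Pi.mulSingle i g)) (F.f (Pi.mulSingle i g0)) := by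
        apply le_hammingDist_of_disagree
        intro j hj
        simp only [Finset.mem_insert, Finset.mem_singleton] at hj
        have hdg : ∀ k, F.f (Pi.mulSingle i g) k ≠ 1 ↔ k = d := by
          intro k; rw [← mem_gsupp (x := F.f (Pi.mulSingle i g)), hd, Finset.mem_singleton]
        have hdg0 : ∀ k, F.f (Pi.mulSingle i g0) k ≠ 1 ↔ k = c i := by
          intro k; rw [← mem_gsupp (x := F.f (Pi.mulSingle i g0)), hc i, Finset.mem_singleton]
        rcases hj with hj | hj
        · intro h
          have h1 : F.f (Pi.mulSingle i g) j ≠ 1 := (hdg j).mpr hj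
          rw [h] at h1
          have h2 : j = c i := (hdg0 j).mp h1
          exact hne (by rw [← hj, h2])
        · intro h
          have h1 : F.f (Pi.mulSingle i g0) j ≠ 1 := (hdg0 j).mpr hj
          rw [← h] at h1
          have h2 : j = d := (hdg j).mp h1
          exact hne (by rw [← h2, hj])
      have h3 : ({d, c i} : Finset (Fin b)).card = 2 := by
        rw [Finset.card_insert_of_notMem (by simpa using hne), Finset.card_singleton]
      omega
  -- L2
  have L2 : ∀ x, gsupp (F.f x) = (gsupp x).image c := by
    suffices h : ∀ (N : ℕ) (x : Fin a → G), (gsupp x).card = N →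
        gsupp (F.f x) = (gsupp x).image c by
      intro x; exact h _ x rfl
    intro N
    induction N using Nat.strong_induction_on with
    | _ N ih =>
      intro x hN
      rcases Finset.eq_empty_or_nonempty (gsupp x) with he | ⟨i, hi⟩
      · rw [he, gsupp_eq_empty.mp he, F.map_one, Finset.image_empty, gsupp_eq_empty]
      · have hxi : x i ≠ 1 := mem_gsupp.mp hi
        set x' := Function.update x i 1 with hx'
        have hdec : x = Pi.mulSingle i (x i) * x' := by
          funext j
          rcases eq_or_ne j i with rfl | hj
          · simp [Pi.mul_apply, hx', Function.update_self, Pi.mulSingle_apply]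
          · simp [Pi.mul_apply, hx', Function.update_of_ne hj, Pi.mulSingle_apply, hj]
        have hsx' : gsupp x' = (gsupp x).erase i := by
          ext j
          rcases eq_or_ne j i with rfl | hj
          · simp [mem_gsupp, hx', Function.update_self]
          · simp [mem_gsupp, hx', Function.update_of_ne hj, hj]
        have hcard' : (gsupp x').card < N := by
          rw [hsx', Finset.card_erase_of_mem hi, hN]
          have : 0 < N := by
            rw [← hN]
            exact Finset.card_pos.mpr ⟨i, hi⟩
          omega
        have ihx' := ih _ hcard' x' rfl
        have hsub : gsupp (F.f x) ⊆ (gsupp x).image c := by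
          calc gsupp (F.f x) = gsupp (F.f (Pi.mulSingle i (x i)) * F.f x') := by
                rw [← F.hom, ← hdec]
            _ ⊆ gsupp (F.f (Pi.mulSingle i (x i))) ∪ gsupp (F.f x') := gsupp_mul_subset _ _
            _ = {c i} ∪ (gsupp x').image c := by rw [L1 i (x i) hxi, ihx']
            _ ⊆ (gsupp x).image c := by
                apply Finset.union_subset
                · simpa using Finset.mem_image_of_mem c hi
                · exact Finset.image_subset_image (hsx' ▸ Finset.erase_subset i _)
        apply Finset.eq_of_subset_of_card_le hsub
        calc ((gsupp x).image c).card ≤ (gsupp x).card := Finset.card_image_le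
          _ = (gsupp (F.f x)).card := (F.card_gsupp x).symm
  refine ⟨c, ⟨?_, ?_⟩, L2⟩
  · -- injective
    intro i i' hii'
    by_contra hne
    have hx : gsupp (Pi.mulSingle i g0 * Pi.mulSingle i' g0 : Fin a → G) = {i, i'} := by
      ext j
      simp only [mem_gsupp, Pi.mul_apply, Finset.mem_insert, Finset.mem_singleton,
        Pi.mulSingle_apply]
      rcases eq_or_ne j i with rfl | hj
      · simp [hne, hg0]
      · rcases eq_or_ne j i' with rfl | hj'
        · simp [hj, hg0]
        · simp [hj, hj']
    have h1 := F.card_gsupp (Pi.mulSingle i g0 * Pi.mulSingle i' g0)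
    rw [L2, hx] at h1
    have h2 : ({i, i'} : Finset (Fin a)).card = 2 := by
      rw [Finset.card_insert_of_notMem (by simpa using hne), Finset.card_singleton]
    rw [h2] at h1
    have h3 : (({i, i'} : Finset (Fin a)).image c).card ≤ 1 := by
      have hsub : ({i, i'} : Finset (Fin a)).image c ⊆ {c i} := by
        intro j hj
        simp only [Finset.mem_image, Finset.mem_insert, Finset.mem_singleton] at hj ⊢
        obtain ⟨k, hk, rfl⟩ := hj
        rcases hk with rfl | rfl
        · rfl
        · exact hii'.symm
      calc _ ≤ ({c i} : Finset (Fin b)).card := Finset.card_le_card hsub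
        _ = 1 := Finset.card_singleton _
    omega
  · -- surjective
    intro d
    have h1 : F.f (Fi.f (Pi.mulSingle d g0)) = Pi.mulSingle d g0 := hri _
    have h2 := L2 (Fi.f (Pi.mulSingle d g0))
    rw [h1, gsupp_mulSingle d hg0] at h2
    have : d ∈ (gsupp (Fi.f (Pi.mulSingle d g0))).image c := by
      rw [← h2]; simp
    obtain ⟨i, _, hi⟩ := Finset.mem_image.mp this
    exact ⟨i, hi⟩

/-- projections commute with isometric homs along the coordinate bijection -/
lemma proj_commute {n m : ℕ} (f : (Fin n → G) → (Fin m → G))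
    (hom : ∀ x y, f (x * y) = f x * f y) (π : Fin n → Fin m)
    (hinj : Function.Injective π) (hsupp : ∀ x, gsupp (f x) = (gsupp x).image π)
    (A : Finset (Fin n)) (x : Fin n → G) :
    f (gproj A x) = gproj (A.image π) (f x) := by
  have hx : x = gproj A x * gproj Aᶜ x := (gproj_mul_gprojc A x).symm
  have hfu : gsupp (f (gproj A x)) ⊆ A.image π := by
    rw [hsupp, gsupp_gproj]
    exact Finset.image_subset_image (Finset.inter_subset_right)
  have hfv : Disjoint (gsupp (f (gproj Aᶜ x))) (A.image π) := by
    rw [hsupp, gsupp_gproj]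
    rw [Finset.disjoint_left]
    intro k hk hk'
    obtain ⟨j, hj, rfl⟩ := Finset.mem_image.mp hk
    obtain ⟨j', hj', hjj'⟩ := Finset.mem_image.mp hk'
    have : j' = j := hinj hjj'
    subst this
    rw [Finset.mem_inter, Finset.mem_compl] at hj
    exact hj.2 hj'
  funext k
  by_cases hk : k ∈ A.image π
  · have h1 : f x k = f (gproj A x) k * f (gproj Aᶜ x) k := by
      conv_lhs => rw [hx, hom]
      rfl
    have h2 : f (gproj Aᶜ x) k = 1 := by
      by_contra h
      exact (Finset.disjoint_left.mp hfv) (mem_gsupp.mpr h) hk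
    simp [gproj, hk, h1, h2]
  · have h2 : f (gproj A x) k = 1 := by
      by_contra h
      exact hk (hfu (mem_gsupp.mpr h))
    simp [gproj, hk, h2]

end GCIsom
end Aux
section Stage2
variable {G : Type*} [Group G] [DecidableEq G]

/-- `C` splits along the coordinate set `A`. -/
def Splits {n : ℕ} (C : Subgroup (Fin n → G)) (A : Finset (Fin n)) : Prop :=
  ∀ x ∈ C, gproj A x ∈ C

lemma Splits.inter {n : ℕ} {C : Subgroup (Fin n → G)} {A B : Finset (Fin n)}
    (hA : Splits C A) (hB : Splits C B) : Splits C (A ∩ B) := fun x hx => by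
  rw [← gproj_gproj]; exact hA _ (hB _ hx)

lemma Splits.compl {n : ℕ} {C : Subgroup (Fin n → G)} {A : Finset (Fin n)}
    (hA : Splits C A) : Splits C Aᶜ := fun x hx => by
  have h := gproj_mul_gprojc A x
  have : gproj Aᶜ x = (gproj A x)⁻¹ * x := by
    rw [eq_inv_mul_iff_mul_eq]; exact h
  rw [this]
  exact mul_mem (inv_mem (hA _ hx)) hx

lemma hammingDist_comp_equiv {p q : ℕ} (x y : Fin p → G) (e : Fin q ≃ Fin p) :
    hammingDist (x ∘ e) (y ∘ e) = hammingDist x y := by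
  apply Finset.card_bij' (fun i _ => e i) (fun j _ => e.symm j) <;>
    simp [Function.comp]

lemma hammingDist_comp_le {p q : ℕ} (x y : Fin p → G) (u : Fin q → Fin p)
    (hu : Function.Injective u) :
    hammingDist (x ∘ u) (y ∘ u) ≤ hammingDist x y := by
  apply Finset.card_le_card_of_injOn u
  · intro i hi
    rw [Finset.mem_coe, Finset.mem_filter] at hi ⊢
    exact ⟨Finset.mem_univ _, hi.2⟩
  · exact fun i _ j _ h => hu h

lemma mem_gcSum {p q : ℕ} {P : Subgroup (Fin p → G)} {Q : Subgroup (Fin q → G)}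
    (z : Fin (p + q) → G) :
    z ∈ gcSum P Q ↔ (fun u => z (Fin.castAdd q u)) ∈ P ∧ (fun v => z (Fin.natAdd p v)) ∈ Q :=
  Iff.rfl

/-- A nontrivial splitting yields decomposability. -/
lemma Splits.gcDecomposable {p : ℕ} {K : Subgroup (Fin p → G)} {S : Finset (Fin p)}
    (hS : Splits K S) (h1 : S.Nonempty) (h2 : Sᶜ.Nonempty) : GCDecomposable K := by
  classical
  set a := S.card with ha
  set b := Sᶜ.card with hb
  have e1 : {x : Fin p // x ∈ S} ≃ Fin a := (S.orderIsoOfFin rfl).toEquiv.symm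
  have e2' : {x : Fin p // ¬ x ∈ S} ≃ {x : Fin p // x ∈ Sᶜ} :=
    Equiv.subtypeEquivRight (fun x => (Finset.mem_compl).symm)
  have e2 : {x : Fin p // ¬ x ∈ S} ≃ Fin b := e2'.trans (Sᶜ.orderIsoOfFin rfl).toEquiv.symm
  set χ : Fin p ≃ Fin (a + b) :=
    (Equiv.sumCompl (· ∈ S)).symm.trans ((Equiv.sumCongr e1 e2).trans finSumFinEquiv) with hχ
  have F1 : ∀ i ∈ S, ∃ u : Fin a, χ i = Fin.castAdd b u := by
    intro i hi
    refine ⟨e1 ⟨i, hi⟩, ?_⟩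
    simp only [hχ, Equiv.trans_apply, Equiv.sumCongr_apply]
    rw [Equiv.sumCompl_symm_apply_of_pos hi]
    simp [finSumFinEquiv_apply_left]
  have F2 : ∀ i ∉ S, ∃ v : Fin b, χ i = Fin.natAdd a v := by
    intro i hi
    refine ⟨e2 ⟨i, hi⟩, ?_⟩
    simp only [hχ, Equiv.trans_apply, Equiv.sumCongr_apply]
    rw [Equiv.sumCompl_symm_apply_of_neg hi]
    simp [finSumFinEquiv_apply_right]
  -- the two restriction homs
  set r1 : (Fin p → G) →* (Fin a → G) :=
    { toFun := fun x => fun u => x (χ.symm (Fin.castAdd b u))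
      map_one' := rfl
      map_mul' := fun _ _ => rfl } with hr1
  set r2 : (Fin p → G) →* (Fin b → G) :=
    { toFun := fun x => fun v => x (χ.symm (Fin.natAdd a v))
      map_one' := rfl
      map_mul' := fun _ _ => rfl } with hr2
  set P : Subgroup (Fin a → G) := K.map r1 with hP
  set Q : Subgroup (Fin b → G) := K.map r2 with hQ
  refine ⟨a, b, P, Q, Finset.card_pos.mpr h1, Finset.card_pos.mpr h2,
    (fun x => x ∘ χ.symm), (fun y => y ∘ χ), ⟨fun _ _ => rfl, ?_, ?_⟩,
    ⟨fun _ _ => rfl, ?_, ?_⟩, ?_, ?_⟩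
  · -- maps K into gcSum P Q
    intro x hx
    rw [mem_gcSum]
    exact ⟨⟨x, hx, rfl⟩, ⟨x, hx, rfl⟩⟩
  · -- distance
    intro x y
    exact le_of_eq (hammingDist_comp_equiv x y χ.symm)
  · -- maps gcSum P Q into K
    intro y hy
    rw [mem_gcSum] at hy
    obtain ⟨⟨x1, hx1, hx1'⟩, ⟨x2, hx2, hx2'⟩⟩ := hy
    have key : y ∘ χ = gproj S x1 * gproj Sᶜ x2 := by
      funext i
      simp only [Function.comp_apply, Pi.mul_apply, gproj, Finset.mem_compl]
      by_cases hi : i ∈ S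
      · obtain ⟨u, hu⟩ := F1 i hi
        have : y (χ i) = x1 i := by
          rw [hu]
          calc y (Fin.castAdd b u) = x1 (χ.symm (Fin.castAdd b u)) := (congrFun hx1' u).symm
            _ = x1 i := by rw [← hu, Equiv.symm_apply_apply]
        simp [hi, this]
      · obtain ⟨v, hv⟩ := F2 i hi
        have : y (χ i) = x2 i := by
          rw [hv]
          calc y (Fin.natAdd a v) = x2 (χ.symm (Fin.natAdd a v)) := (congrFun hx2' v).symm
            _ = x2 i := by rw [← hv, Equiv.symm_apply_apply]
        simp [hi, this]
    show y ∘ χ ∈ K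
    rw [key]
    exact mul_mem (hS _ hx1) (hS.compl _ hx2)
  · -- distance
    intro x y
    exact le_of_eq (hammingDist_comp_equiv x y χ)
  · intro x; funext i; simp
  · intro y; funext i; simp

end Stage2
section Stage3
variable {G : Type*} [Group G] [DecidableEq G]

lemma gcMultiSum_blocks :
    ∀ (k : ℕ) (len : Fin k → ℕ) (D : ∀ i, Subgroup (Fin (len i) → G)),
    ∃ emb : ∀ j : Fin k, Fin (len j) → Fin (∑ i, len i),
      (∀ j, Function.Injective (emb j)) ∧
      (∀ j j' t t', emb j t = emb j' t' → j = j') ∧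
      (∀ x : Fin (∑ i, len i) → G, x ∈ gcMultiSum D ↔ ∀ j, (fun t => x (emb j t)) ∈ D j) := by
  intro k
  induction k with
  | zero =>
    intro len D
    refine ⟨fun j => j.elim0, fun j => j.elim0, fun j => j.elim0, fun x => ?_⟩
    constructor
    · intro _ j; exact j.elim0
    · intro _; exact Subgroup.mem_top x
  | succ k ih =>
    intro len D
    obtain ⟨emb', h1', h2', h3'⟩ := ih (fun i => len i.succ) (fun i => D i.succ)
    have h' : len 0 + ∑ i : Fin k, len i.succ = ∑ i, len i := (Fin.sum_univ_succ len).symm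
    set emb : ∀ j : Fin (k+1), Fin (len j) → Fin (∑ i, len i) :=
      fun j => Fin.cases (motive := fun j => Fin (len j) → Fin (∑ i, len i))
        (fun t => Fin.cast h' (Fin.castAdd _ t))
        (fun j t => Fin.cast h' (Fin.natAdd (len 0) (emb' j t))) j with hemb
    have hemb0 : ∀ t, emb 0 t = Fin.cast h' (Fin.castAdd _ t) := by
      intro t; simp only [hemb]; rw [Fin.cases_zero]
    have hembs : ∀ (j : Fin k) t, emb j.succ t = Fin.cast h' (Fin.natAdd (len 0) (emb' j t)) := by
      intro j t; simp only [hemb]; rw [Fin.cases_succ]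
    have hv0 : ∀ t, ((emb 0 t : Fin (∑ i, len i)) : ℕ) = (t : ℕ) := by
      intro t; rw [hemb0]; simp
    have hvs : ∀ (j : Fin k) t,
        ((emb j.succ t : Fin (∑ i, len i)) : ℕ) = len 0 + (emb' j t : ℕ) := by
      intro j t; rw [hembs]; simp
    have sep0s : ∀ (j : Fin k) t t', emb 0 t ≠ emb j.succ t' := by
      intro j t t' h
      have hval := congrArg Fin.val h
      rw [hv0, hvs] at hval
      have ht := t.isLt
      omega
    have sepss : ∀ (j j' : Fin k) t t', emb j.succ t = emb j'.succ t' → j = j' := by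
      intro j j' t t' h
      have hval := congrArg Fin.val h
      rw [hvs, hvs] at hval
      exact h2' j j' t t' (Fin.ext (by omega))
    refine ⟨emb, ?_, ?_, ?_⟩
    · -- injectivity
      intro j
      refine Fin.cases ?_ ?_ j
      · intro t t' h
        have hval := congrArg Fin.val h
        rw [hv0, hv0] at hval
        exact Fin.ext hval
      · intro j1 t t' h
        have hval := congrArg Fin.val h
        rw [hvs, hvs] at hval
        exact h1' j1 (Fin.ext (by omega))
    · -- separation
      intro j j' t t' h
      rcases Fin.eq_zero_or_eq_succ j with rfl | ⟨j1, rfl⟩ <;>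
        rcases Fin.eq_zero_or_eq_succ j' with rfl | ⟨j2, rfl⟩
      · rfl
      · exact absurd h (sep0s j2 t t')
      · exact absurd h.symm (sep0s j1 t' t)
      · exact congrArg Fin.succ (sepss j1 j2 t t' h)
    · -- membership
      intro x
      have hx : x ∈ gcMultiSum D ↔
          ((fun t => x (Fin.cast h' (Fin.castAdd _ t))) ∈ D 0 ∧
           (fun s => x (Fin.cast h' (Fin.natAdd (len 0) s))) ∈
             gcMultiSum (fun i => D i.succ)) := Iff.rfl
      rw [hx, h3' (fun s => x (Fin.cast h' (Fin.natAdd (len 0) s)))]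
      constructor
      · rintro ⟨hz, hs⟩ j
        refine Fin.cases ?_ ?_ j
        · have he : (fun t => x (emb 0 t)) = fun t => x (Fin.cast h' (Fin.castAdd _ t)) := by
            funext t; rw [hemb0]
          rw [he]; exact hz
        · intro j1
          have he : (fun t => x (emb j1.succ t)) =
              fun t => x (Fin.cast h' (Fin.natAdd (len 0) (emb' j1 t))) := by
            funext t; rw [hembs]
          rw [he]; exact hs j1
      · intro hall
        constructor
        · have := hall 0
          have he : (fun t => x (emb 0 t)) = fun t => x (Fin.cast h' (Fin.castAdd _ t)) := by
            funext t; rw [hemb0]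
          rwa [he] at this
        · intro j1
          have := hall j1.succ
          have he : (fun t => x (emb j1.succ t)) =
              fun t => x (Fin.cast h' (Fin.natAdd (len 0) (emb' j1 t))) := by
            funext t; rw [hembs]
          rwa [he] at this

end Stage3
section Stage4
variable {G : Type*} [Group G] [DecidableEq G]

/-- restriction along an embedding of coordinates -/
def gres {p N : ℕ} (u : Fin p → Fin N) (x : Fin N → G) : Fin p → G := fun t => x (u t)

/-- inclusion along an embedding of coordinates (1 off the range) -/
noncomputable def ginc {p N : ℕ} (u : Fin p → Fin N) (x : Fin p → G) : Fin N → G :=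
  Function.extend u x (fun _ => 1)

variable {p N : ℕ} {u : Fin p → Fin N}

lemma ginc_apply (hu : Function.Injective u) (x : Fin p → G) (t : Fin p) :
    ginc u x (u t) = x t := hu.extend_apply _ _ _

lemma ginc_apply_ne (x : Fin p → G) {c : Fin N} (hc : ∀ t, u t ≠ c) :
    ginc u x c = 1 :=
  Function.extend_apply' _ _ _ (by rintro ⟨t, rfl⟩; exact hc t rfl)

lemma ginc_mul (hu : Function.Injective u) (x y : Fin p → G) :
    ginc u (x * y) = ginc u x * ginc u y := by
  funext c
  by_cases h : ∃ t, u t = c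
  · obtain ⟨t, rfl⟩ := h
    simp [ginc_apply hu, Pi.mul_apply]
  · push_neg at h
    simp [Pi.mul_apply, ginc_apply_ne _ h]

lemma gres_ginc (hu : Function.Injective u) (x : Fin p → G) :
    gres u (ginc u x) = x := by
  funext t; exact ginc_apply hu x t

lemma gsupp_ginc_subset (x : Fin p → G) :
    gsupp (ginc u x) ⊆ Finset.univ.image u := by
  intro c hc
  rw [mem_gsupp] at hc
  by_contra h
  refine hc (ginc_apply_ne x ?_)
  intro t ht
  exact h (ht ▸ Finset.mem_image_of_mem u (Finset.mem_univ t))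

lemma ginc_gres (hu : Function.Injective u) (x : Fin N → G) :
    ginc u (gres u x) = gproj (Finset.univ.image u) x := by
  funext c
  by_cases h : ∃ t, u t = c
  · obtain ⟨t, rfl⟩ := h
    have : u t ∈ Finset.univ.image u := Finset.mem_image_of_mem u (Finset.mem_univ t)
    simp [ginc_apply hu, gproj, this, gres]
  · push_neg at h
    have : c ∉ Finset.univ.image u := by
      intro hc
      obtain ⟨t, _, ht⟩ := Finset.mem_image.mp hc
      exact h t ht
    simp [ginc_apply_ne _ h, gproj, this]

lemma gres_dist_le (x y : Fin N → G) (hu : Function.Injective u) :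
    hammingDist (gres u x) (gres u y) ≤ hammingDist x y :=
  hammingDist_comp_le x y u hu

lemma ginc_dist_le (hu : Function.Injective u) (x y : Fin p → G) :
    hammingDist (ginc u x) (ginc u y) ≤ hammingDist x y := by
  have hsub : (Finset.univ.filter fun c => ginc u x c ≠ ginc u y c) ⊆
      (Finset.univ.filter fun t => x t ≠ y t).image u := by
    intro c hc
    rw [Finset.mem_filter] at hc
    by_cases h : ∃ t, u t = c
    · obtain ⟨t, rfl⟩ := h
      rw [ginc_apply hu, ginc_apply hu] at hc
      exact Finset.mem_image_of_mem u (Finset.mem_filter.mpr ⟨Finset.mem_univ t, hc.2⟩)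
    · push_neg at h
      exact absurd (by rw [ginc_apply_ne _ h, ginc_apply_ne _ h]) hc.2
  calc hammingDist (ginc u x) (ginc u y)
      ≤ ((Finset.univ.filter fun t => x t ≠ y t).image u).card := Finset.card_le_card hsub
    _ ≤ (Finset.univ.filter fun t => x t ≠ y t).card := Finset.card_image_le
    _ = hammingDist x y := rfl

/-- relativizing a splitting of the ambient code to a block -/
lemma block_relativize {N p : ℕ} (E : Subgroup (Fin N → G)) (K : Subgroup (Fin p → G))
    (u : Fin p → Fin N) (hu : Function.Injective u)
    (hres : ∀ x ∈ E, gres u x ∈ K) (hinc : ∀ x ∈ K, ginc u x ∈ E)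
    (A : Finset (Fin N)) (hA : A ⊆ Finset.univ.image u) (hsplit : Splits E A)
    (hne : A.Nonempty) (hne2 : A ≠ Finset.univ.image u) : GCDecomposable K := by
  classical
  set S : Finset (Fin p) := Finset.univ.filter (fun t => u t ∈ A) with hs
  have hSsplit : Splits K S := by
    intro x hx
    have key : gproj S x = gres u (gproj A (ginc u x)) := by
      funext t
      by_cases ht : u t ∈ A
      · have htS : t ∈ S := by rw [hs]; simp [ht]
        simp [gproj, gres, htS, ht, ginc_apply hu]
      · have htS : t ∉ S := by rw [hs]; simp [ht]
        simp [gproj, gres, htS, ht]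
    rw [key]
    exact hres _ (hsplit _ (hinc x hx))
  have h1 : S.Nonempty := by
    obtain ⟨c, hc⟩ := hne
    obtain ⟨t, _, ht⟩ := Finset.mem_image.mp (hA hc)
    exact ⟨t, by rw [hs]; simp [ht ▸ hc]⟩
  have h2 : Sᶜ.Nonempty := by
    obtain ⟨c, hcmem, hcA⟩ := Finset.exists_of_ssubset (lt_of_le_of_ne hA hne2)
    obtain ⟨t, _, ht⟩ := Finset.mem_image.mp hcmem
    refine ⟨t, Finset.mem_compl.mpr ?_⟩
    rw [hs]
    simp [ht ▸ hcA]
  exact hSsplit.gcDecomposable h1 h2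

end Stage4
open Fin.NatCast
/-- If a cyclic group code `C` is isomorphic as a group code to a direct
sum `D_1 ⊕ ⋯ ⊕ D_m` of indecomposable group codes, then all the summands are isomorphic to
the first one. -/
theorem cyclic_decomposition_isotypic {G : Type*} [Group G] [Fintype G] [DecidableEq G]
    {n : ℕ} (C : Subgroup (Fin n → G)) (hcyc : IsCyclicGC C)
    {m : ℕ} (hm : 0 < m) {len : Fin m → ℕ} (hlen : ∀ j, 0 < len j)
    (D : ∀ j, Subgroup (Fin (len j) → G)) (hind : ∀ j, ¬ GCDecomposable (D j))
    (hiso : GroupCodeIso C (gcMultiSum D)) :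
    ∀ j, GroupCodeIso (D j) (D ⟨0, hm⟩) := by
  classical
  intro j
  by_cases hG : ∀ g : G, g = 1
  · -- trivial group: everything is trivially isomorphic
    refine ⟨fun _ => 1, fun _ => 1, ⟨fun _ _ => (one_mul 1).symm, fun _ _ => one_mem _,
      fun x y => ?_⟩, ⟨fun _ _ => (one_mul 1).symm, fun _ _ => one_mem _, fun x y => ?_⟩,
      fun x => ?_, fun y => ?_⟩
    · simp [hammingDist_self]
    · simp [hammingDist_self]
    · funext i; rw [hG (x i)]; rfl
    · funext i; rw [hG (y i)]; rfl
  · push_neg at hG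
    obtain ⟨g0, hg0⟩ := hG
    obtain ⟨φ, ψ, hφ, hψ, hl, hr⟩ := hiso
    have hφd : ∀ x y, hammingDist (φ x) (φ y) = hammingDist x y := fun x y =>
      le_antisymm (hφ.2.2 x y) (by
        have h := hψ.2.2 (φ x) (φ y); rwa [hl x, hl y] at h)
    have hψd : ∀ x y, hammingDist (ψ x) (ψ y) = hammingDist x y := fun x y =>
      le_antisymm (hψ.2.2 x y) (by
        have h := hφ.2.2 (ψ x) (ψ y); rwa [hr x, hr y] at h)
    obtain ⟨emb, hinj, hsep, hmem⟩ := gcMultiSum_blocks m len D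
    set j0 : Fin m := ⟨0, hm⟩ with hj0
    set E := gcMultiSum D with hE
    set B : ∀ i : Fin m, Finset (Fin (∑ i, len i)) := fun i => Finset.univ.image (emb i)
      with hB
    -- shift maps
    set sh : (Fin n → G) → (Fin n → G) := fun x => x ∘ finRotate n with hsh
    set shi : (Fin n → G) → (Fin n → G) := fun x => x ∘ (finRotate n).symm with hshi
    have hsh_shi : ∀ x, sh (shi x) = x := fun x => by
      funext i; simp only [hsh, hshi, Function.comp_apply, Equiv.symm_apply_apply]
    have hshi_sh : ∀ x, shi (sh x) = x := fun x => by
      funext i; simp only [hsh, hshi, Function.comp_apply, Equiv.apply_symm_apply]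
    have hshiC : ∀ x ∈ C, shi x ∈ C := by
      set e : {x // x ∈ C} → {x // x ∈ C} := fun x => ⟨sh x.1, hcyc x.1 x.2⟩ with he
      have hinje : Function.Injective e := by
        intro x y hxy
        have h1 : sh x.1 = sh y.1 := congrArg Subtype.val hxy
        have h2 : x.1 = y.1 := by rw [← hshi_sh x.1, h1, hshi_sh]
        exact Subtype.ext h2
      have hsurj := Finite.injective_iff_surjective.mp hinje
      intro x hx
      obtain ⟨y, hy⟩ := hsurj ⟨x, hx⟩
      have h1 : sh y.1 = x := congrArg Subtype.val hy
      have h2 : shi x = y.1 := by rw [← h1, hshi_sh]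
      rw [h2]; exact y.2
    -- isometric automorphisms of the ambient space of E
    set Θ : GCIsom G (∑ i, len i) (∑ i, len i) :=
      ⟨fun z => φ (sh (ψ z)),
       fun x y => by simp only [hψ.1, hsh]; rw [← hφ.1]; rfl,
       fun x y => by
         show hammingDist (φ (sh (ψ x))) (φ (sh (ψ y))) = _
         rw [hφd]
         show hammingDist (ψ x ∘ finRotate n) (ψ y ∘ finRotate n) = _
         rw [hammingDist_comp_equiv _ _ (finRotate n), hψd]⟩ with hΘ
    set Θi : GCIsom G (∑ i, len i) (∑ i, len i) :=
      ⟨fun z => φ (shi (ψ z)),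
       fun x y => by simp only [hψ.1, hshi]; rw [← hφ.1]; rfl,
       fun x y => by
         show hammingDist (φ (shi (ψ x))) (φ (shi (ψ y))) = _
         rw [hφd]
         show hammingDist (ψ x ∘ (finRotate n).symm) (ψ y ∘ (finRotate n).symm) = _
         rw [hammingDist_comp_equiv _ _ (finRotate n).symm, hψd]⟩ with hΘi
    have hΘΘi : ∀ z, Θ.f (Θi.f z) = z := fun z => by
      show φ (sh (ψ (φ (shi (ψ z))))) = z
      rw [hl, hsh_shi, hr]
    have hΘiΘ : ∀ z, Θi.f (Θ.f z) = z := fun z => by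
      show φ (shi (ψ (φ (sh (ψ z))))) = z
      rw [hl, hshi_sh, hr]
    have hΘE : ∀ z ∈ E, Θ.f z ∈ E := fun z hz => hφ.2.1 _ (hcyc _ (hψ.2.1 z hz))
    have hΘiE : ∀ z ∈ E, Θi.f z ∈ E := fun z hz => hφ.2.1 _ (hshiC _ (hψ.2.1 z hz))
    obtain ⟨π, hπbij, hπsupp⟩ := Θ.exists_perm Θi hΘΘi hg0
    obtain ⟨πi, hπibij, hπisupp⟩ := Θi.exists_perm Θ hΘiΘ hg0
    have hπiπ : ∀ c, πi (π c) = c := by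
      intro c
      have h1 := hπisupp (Θ.f (Pi.mulSingle c g0))
      rw [hΘiΘ, gsupp_mulSingle c hg0, hπsupp, gsupp_mulSingle c hg0,
        Finset.image_singleton, Finset.image_singleton] at h1
      exact (Finset.singleton_injective h1).symm
    have hππi : ∀ c, π (πi c) = c := by
      intro c
      have h1 := hπsupp (Θi.f (Pi.mulSingle c g0))
      rw [hΘΘi, gsupp_mulSingle c hg0, hπisupp, gsupp_mulSingle c hg0,
        Finset.image_singleton, Finset.image_singleton] at h1
      exact (Finset.singleton_injective h1).symm
    have hπiπk : ∀ k c, πi^[k] (π^[k] c) = c := fun k => Function.LeftInverse.iterate hπiπ k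
    have hππik : ∀ k c, π^[k] (πi^[k] c) = c := fun k => Function.LeftInverse.iterate hππi k
    -- iterates
    have hiterE : ∀ k, ∀ z ∈ E, Θ.f^[k] z ∈ E := by
      intro k
      induction k with
      | zero => intro z hz; simpa using hz
      | succ k ih =>
        intro z hz
        rw [Function.iterate_succ_apply']
        exact hΘE _ (ih z hz)
    have hiteriE : ∀ k, ∀ z ∈ E, Θi.f^[k] z ∈ E := by
      intro k
      induction k with
      | zero => intro z hz; simpa using hz
      | succ k ih =>
        intro z hz
        rw [Function.iterate_succ_apply']
        exact hΘiE _ (ih z hz)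
    have hiterhom : ∀ k (x y : Fin (∑ i, len i) → G),
        Θ.f^[k] (x * y) = Θ.f^[k] x * Θ.f^[k] y := by
      intro k
      induction k with
      | zero => intro x y; simp
      | succ k ih =>
        intro x y
        rw [Function.iterate_succ_apply', Function.iterate_succ_apply',
          Function.iterate_succ_apply', ih, Θ.hom]
    have hiterihom : ∀ k (x y : Fin (∑ i, len i) → G),
        Θi.f^[k] (x * y) = Θi.f^[k] x * Θi.f^[k] y := by
      intro k
      induction k with
      | zero => intro x y; simp
      | succ k ih =>
        intro x y
        rw [Function.iterate_succ_apply', Function.iterate_succ_apply',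
          Function.iterate_succ_apply', ih, Θi.hom]
    have hiterdist : ∀ k (x y : Fin (∑ i, len i) → G),
        hammingDist (Θ.f^[k] x) (Θ.f^[k] y) = hammingDist x y := by
      intro k
      induction k with
      | zero => intro x y; simp
      | succ k ih =>
        intro x y
        rw [Function.iterate_succ_apply', Function.iterate_succ_apply', Θ.dist, ih]
    have hiteridist : ∀ k (x y : Fin (∑ i, len i) → G),
        hammingDist (Θi.f^[k] x) (Θi.f^[k] y) = hammingDist x y := by
      intro k
      induction k with
      | zero => intro x y; simp
      | succ k ih =>
        intro x y
        rw [Function.iterate_succ_apply', Function.iterate_succ_apply', Θi.dist, ih]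
    have hitersupp : ∀ k (z : Fin (∑ i, len i) → G),
        gsupp (Θ.f^[k] z) = (gsupp z).image π^[k] := by
      intro k
      induction k with
      | zero => intro z; simp
      | succ k ih =>
        intro z
        rw [Function.iterate_succ_apply', hπsupp, ih, Finset.image_image,
          Function.iterate_succ' π k]
    have hitisupp : ∀ k (z : Fin (∑ i, len i) → G),
        gsupp (Θi.f^[k] z) = (gsupp z).image πi^[k] := by
      intro k
      induction k with
      | zero => intro z; simp
      | succ k ih =>
        intro z
        rw [Function.iterate_succ_apply', hπisupp, ih, Finset.image_image,
          Function.iterate_succ' πi k]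
    -- transport of split sets
    have hsplit_image : ∀ A, Splits E A → Splits E (A.image π) := by
      intro A hA z hz
      have hpc := GCIsom.proj_commute Θ.f Θ.hom π hπbij.1 hπsupp A (Θi.f z)
      rw [hΘΘi z] at hpc
      rw [← hpc]
      exact hΘE _ (hA _ (hΘiE z hz))
    have hsplit_imagei : ∀ A, Splits E A → Splits E (A.image πi) := by
      intro A hA z hz
      have hpc := GCIsom.proj_commute Θi.f Θi.hom πi hπibij.1 hπisupp A (Θ.f z)
      rw [hΘiΘ z] at hpc
      rw [← hpc]
      exact hΘiE _ (hA _ (hΘE z hz))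
    have hsplit_iter : ∀ k A, Splits E A → Splits E (A.image π^[k]) := by
      intro k
      induction k with
      | zero => intro A hA; simpa using hA
      | succ k ih =>
        intro A hA
        have h1 := hsplit_image _ (ih A hA)
        rw [Finset.image_image, ← Function.iterate_succ' π k] at h1
        exact h1
    have hsplit_iteri : ∀ k A, Splits E A → Splits E (A.image πi^[k]) := by
      intro k
      induction k with
      | zero => intro A hA; simpa using hA
      | succ k ih =>
        intro A hA
        have h1 := hsplit_imagei _ (ih A hA)
        rw [Finset.image_image, ← Function.iterate_succ' πi k] at h1
        exact h1
    -- blocks split E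
    have hBsplit : ∀ i, Splits E (B i) := by
      intro i x hx
      rw [hmem] at hx ⊢
      intro i'
      by_cases hii' : i' = i
      · subst hii'
        have he : (fun t => gproj (B i') x (emb i' t)) = fun t => x (emb i' t) := by
          funext t
          have hmm : emb i' t ∈ B i' := Finset.mem_image_of_mem _ (Finset.mem_univ t)
          simp [gproj, hmm]
        rw [he]; exact hx i'
      · have he : (fun t => gproj (B i) x (emb i' t)) = (1 : Fin (len i') → G) := by
          funext t
          have hnm : emb i' t ∉ B i := by
            intro hmm
            obtain ⟨t', _, ht'⟩ := Finset.mem_image.mp hmm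
            exact hii' (hsep i' i t t' ht'.symm)
          simp [gproj, hnm]
        rw [he]; exact one_mem _
    have hres_mem : ∀ i, ∀ x ∈ E, gres (emb i) x ∈ D i := fun i x hx => (hmem x).mp hx i
    have hinc_mem : ∀ i, ∀ x ∈ D i, ginc (emb i) x ∈ E := by
      intro i x hx
      rw [hmem]
      intro i'
      by_cases hii' : i' = i
      · subst hii'
        have he : (fun t => ginc (emb i') x (emb i' t)) = x := by
          funext t; exact ginc_apply (hinj i') x t
        rw [he]; exact hx
      · have he : (fun t => ginc (emb i) x (emb i' t)) = (1 : Fin (len i') → G) := by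
          funext t
          refine ginc_apply_ne x ?_
          intro t' ht'
          exact hii' ((hsep i i' t' t ht')).symm
        rw [he]; exact one_mem _
    -- every split set is block-aligned
    have hU : ∀ A, Splits E A → ∀ i, B i ⊆ A ∨ Disjoint (B i) A := by
      intro A hA i
      by_contra hcon
      push_neg at hcon
      obtain ⟨hnsub, hndisj⟩ := hcon
      have hint : Splits E (B i ∩ A) := (hBsplit i).inter hA
      have hne : (B i ∩ A).Nonempty := Finset.not_disjoint_iff_nonempty_inter.mp hndisj
      have hneq : B i ∩ A ≠ B i := fun h => hnsub (Finset.inter_eq_left.mp h)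
      exact hind i (block_relativize E (D i) (emb i) (hinj i) (hres_mem i) (hinc_mem i)
        (B i ∩ A) Finset.inter_subset_left hint hne hneq)
    -- transitivity of π
    set c0 : Fin (∑ i, len i) := emb j ⟨0, hlen j⟩ with hc0
    set c1 : Fin (∑ i, len i) := emb j0 ⟨0, hlen j0⟩ with hc1
    -- identify the coordinate permutations of φ, ψ, sh
    set Φ : GCIsom G n (∑ i, len i) := ⟨φ, hφ.1, hφd⟩ with hΦ
    set Ψ : GCIsom G (∑ i, len i) n := ⟨ψ, hψ.1, hψd⟩ with hΨ
    obtain ⟨σ, hσbij, hσsupp⟩ := Φ.exists_perm Ψ hr hg0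
    obtain ⟨τ, hτbij, hτsupp⟩ := Ψ.exists_perm Φ hl hg0
    have hτσ : ∀ i, τ (σ i) = i := by
      intro c
      have h1 := hτsupp (Φ.f (Pi.mulSingle c g0))
      have h2 : Ψ.f (Φ.f (Pi.mulSingle c g0)) = Pi.mulSingle c g0 := hl _
      rw [h2, gsupp_mulSingle c hg0, hσsupp, gsupp_mulSingle c hg0,
        Finset.image_singleton, Finset.image_singleton] at h1
      exact (Finset.singleton_injective h1).symm
    have hn0 : n ≠ 0 := by
      intro h
      subst h
      exact Fin.elim0 (τ c0)
    obtain ⟨n', rfl⟩ : ∃ n', n = n' + 1 := by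
      rcases n with _ | n'
      · exact absurd rfl hn0
      · exact ⟨n', rfl⟩
    have hrsupp : ∀ x : Fin (n' + 1) → G,
        gsupp (sh x) = (gsupp x).image (finRotate (n' + 1)).symm := by
      intro x
      ext c
      simp only [mem_gsupp, Finset.mem_image]
      constructor
      · intro h
        exact ⟨finRotate (n' + 1) c, by simpa [hsh] using h, Equiv.symm_apply_apply _ _⟩
      · rintro ⟨d, hd, rfl⟩
        simpa [hsh] using hd
    have hπeq : ∀ c, π c = σ ((finRotate (n' + 1)).symm (τ c)) := by
      intro c
      have h1 := hπsupp (Pi.mulSingle c g0)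
      have h2 : gsupp (Θ.f (Pi.mulSingle c g0)) =
          {σ ((finRotate (n' + 1)).symm (τ c))} := by
        show gsupp (φ (sh (ψ (Pi.mulSingle c g0)))) = _
        have e1 : gsupp (φ (sh (ψ (Pi.mulSingle c g0)))) =
            (gsupp (sh (ψ (Pi.mulSingle c g0)))).image σ := hσsupp _
        have e2 := hrsupp (ψ (Pi.mulSingle c g0))
        have e3 : gsupp (ψ (Pi.mulSingle c g0)) = {τ c} := by
          have := hτsupp (Pi.mulSingle c g0)
          rwa [gsupp_mulSingle c hg0, Finset.image_singleton] at this
        rw [e1, e2, e3, Finset.image_singleton, Finset.image_singleton]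
      rw [gsupp_mulSingle c hg0, Finset.image_singleton] at h1
      exact Finset.singleton_injective (h1.symm.trans h2)
    have hπiter : ∀ k c, π^[k] (σ c) = σ (((finRotate (n' + 1)).symm)^[k] c) := by
      intro k
      induction k with
      | zero => intro c; simp
      | succ k ih =>
        intro c
        rw [Function.iterate_succ_apply', Function.iterate_succ_apply', ih, hπeq, hτσ]
    have hrotiter : ∀ (k : ℕ) (a : Fin (n' + 1)),
        (finRotate (n' + 1))^[k] a = a + (k : Fin (n' + 1)) := by
      intro k
      induction k with
      | zero => intro a; simp
      | succ k ih =>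
        intro a
        rw [Function.iterate_succ_apply', ih, finRotate_succ_apply]
        rw [Nat.cast_add, Nat.cast_one, add_assoc]
    have hrottrans : ∀ a b : Fin (n' + 1), ∃ k, (finRotate (n' + 1))^[k] a = b := by
      intro a b
      refine ⟨((b - a : Fin (n' + 1)) : ℕ), ?_⟩
      rw [hrotiter]
      simp
    have hsymmtrans : ∀ a b : Fin (n' + 1), ∃ k, ((finRotate (n' + 1)).symm)^[k] a = b := by
      intro a b
      obtain ⟨k, hk⟩ := hrottrans b a
      refine ⟨k, ?_⟩
      rw [← hk]
      exact Function.LeftInverse.iterate (Equiv.symm_apply_apply _) k b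
    have hπtrans : ∀ c c' : Fin (∑ i, len i), ∃ k, π^[k] c = c' := by
      intro c c'
      obtain ⟨d, rfl⟩ := hσbij.2 c
      obtain ⟨d', rfl⟩ := hσbij.2 c'
      obtain ⟨k, hk⟩ := hsymmtrans d d'
      exact ⟨k, by rw [hπiter, hk]⟩
    -- find k with B j0 = π^[k] '' (B j)
    obtain ⟨k, hk⟩ := hπtrans c0 c1
    have hc0B : c0 ∈ B j := Finset.mem_image_of_mem _ (Finset.mem_univ _)
    have hc1B : c1 ∈ B j0 := Finset.mem_image_of_mem _ (Finset.mem_univ _)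
    have hAsplit : Splits E ((B j).image π^[k]) := hsplit_iter k _ (hBsplit j)
    have hc1A : c1 ∈ (B j).image π^[k] := hk ▸ Finset.mem_image_of_mem _ hc0B
    have hsub : B j0 ⊆ (B j).image π^[k] := by
      rcases hU _ hAsplit j0 with h | h
      · exact h
      · exact absurd (Finset.disjoint_left.mp h hc1B) (not_not_intro hc1A)
    have hback : (B j0).image πi^[k] ⊆ B j := by
      intro c hc
      obtain ⟨d, hd, rfl⟩ := Finset.mem_image.mp hc
      obtain ⟨e, he, rfl⟩ := Finset.mem_image.mp (hsub hd)
      rw [hπiπk]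
      exact he
    have hApsplit : Splits E ((B j0).image πi^[k]) := hsplit_iteri k _ (hBsplit j0)
    have hApne : ((B j0).image πi^[k]).Nonempty := ⟨πi^[k] c1, Finset.mem_image_of_mem _ hc1B⟩
    have hsub' : B j ⊆ (B j0).image πi^[k] := by
      rcases hU _ hApsplit j with h | h
      · exact h
      · exfalso
        obtain ⟨c, hc⟩ := hApne
        exact Finset.disjoint_left.mp h (hback hc) hc
    have hBeq : (B j0).image πi^[k] = B j := Finset.Subset.antisymm hback hsub'
    have hBeq' : (B j).image π^[k] = B j0 := by
      rw [← hBeq, Finset.image_image]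
      have hcomp : π^[k] ∘ πi^[k] = id := funext (hππik k)
      rw [hcomp, Finset.image_id]
    -- the isomorphism
    set Ff : (Fin (len j) → G) → (Fin (len j0) → G) :=
      fun x => gres (emb j0) (Θ.f^[k] (ginc (emb j) x)) with hFf
    set Gg : (Fin (len j0) → G) → (Fin (len j) → G) :=
      fun y => gres (emb j) (Θi.f^[k] (ginc (emb j0) y)) with hGg
    have hsuppF : ∀ x : Fin (len j) → G, gsupp (Θ.f^[k] (ginc (emb j) x)) ⊆ B j0 := by
      intro x
      rw [hitersupp]
      calc (gsupp (ginc (emb j) x)).image π^[k]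
          ⊆ (B j).image π^[k] := Finset.image_subset_image (gsupp_ginc_subset x)
        _ = B j0 := hBeq'
    have hsuppG : ∀ y : Fin (len j0) → G, gsupp (Θi.f^[k] (ginc (emb j0) y)) ⊆ B j := by
      intro y
      rw [hitisupp]
      calc (gsupp (ginc (emb j0) y)).image πi^[k]
          ⊆ (B j0).image πi^[k] := Finset.image_subset_image (gsupp_ginc_subset y)
        _ = B j := hBeq
    refine ⟨Ff, Gg, ⟨?_, ?_, ?_⟩, ⟨?_, ?_, ?_⟩, ?_, ?_⟩
    · -- Ff hom
      intro x y
      rw [hFf]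
      simp only
      rw [ginc_mul (hinj j), hiterhom]
      rfl
    · -- Ff maps D j into D j0
      intro x hx
      exact hres_mem j0 _ (hiterE k _ (hinc_mem j x hx))
    · -- Ff distance
      intro x y
      calc hammingDist (Ff x) (Ff y)
          ≤ hammingDist (Θ.f^[k] (ginc (emb j) x)) (Θ.f^[k] (ginc (emb j) y)) :=
            gres_dist_le _ _ (hinj j0)
        _ = hammingDist (ginc (emb j) x) (ginc (emb j) y) := hiterdist k _ _
        _ ≤ hammingDist x y := ginc_dist_le (hinj j) x y
    · -- Gg hom
      intro x y
      rw [hGg]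
      simp only
      rw [ginc_mul (hinj j0), hiterihom]
      rfl
    · -- Gg maps D j0 into D j
      intro y hy
      exact hres_mem j _ (hiteriE k _ (hinc_mem j0 y hy))
    · -- Gg distance
      intro x y
      calc hammingDist (Gg x) (Gg y)
          ≤ hammingDist (Θi.f^[k] (ginc (emb j0) x)) (Θi.f^[k] (ginc (emb j0) y)) :=
            gres_dist_le _ _ (hinj j)
        _ = hammingDist (ginc (emb j0) x) (ginc (emb j0) y) := hiteridist k _ _
        _ ≤ hammingDist x y := ginc_dist_le (hinj j0) x y
    · -- left inverse : Gg (Ff x) = x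
      intro x
      rw [hFf, hGg]
      simp only
      rw [ginc_gres (hinj j0)]
      rw [gproj_eq_self (hsuppF x)]
      rw [Function.LeftInverse.iterate hΘiΘ k]
      rw [gres_ginc (hinj j)]
    · -- right inverse : Ff (Gg y) = y
      intro y
      rw [hGg, hFf]
      simp only
      rw [ginc_gres (hinj j)]
      rw [gproj_eq_self (hsuppG y)]
      rw [Function.LeftInverse.iterate hΘΘi k]
      rw [gres_ginc (hinj j0)]
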